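/- Assume the orbit 𝒪 is finite and let ω be the 0-chain (1/|𝒪|) Σ_{a∈𝒪} a. Then for every regular fraction H ∈ ℂ(X,Y,t), the orbit sum H_ω is a Galois invariant: σ(H_ω) = H_ω for every σ in the group of the walk G, hence H_ω ∈ k(x) ∩ k(y). -/

import Mathlib

open IntermediateField
open scoped BigOperators Classical

set_option synthInstance.maxHeartbeats 1000000
set_option maxHeartbeats 1600000

noncomputable section

namespace QuadrantWalk

variable {K : Type} [Field K] [Algebra ℂ K]

/-- Evaluation of the step (Laurent) polynomial `S(X,Y) = ∑ w_{i,j} X^i Y^j`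
    at a pair of elements of a field. -/
def stepEval (St : Finset (ℤ × ℤ)) (w : ℤ × ℤ → ℂ) (u v : K) : K :=
  ∑ p ∈ St, algebraMap ℂ K (w p) * u ^ p.1 * v ^ p.2

/-- The step polynomial involves both `X` and `Y`. -/
def NotUnivariate (St : Finset (ℤ × ℤ)) : Prop :=
  (∃ p ∈ St, ∃ q ∈ St, p.1 ≠ q.1) ∧ ∃ p ∈ St, ∃ q ∈ St, p.2 ≠ q.2

/-- The kernel polynomial `K̃(X,Y,t) = X^mx * Y^my * (1 - t·S(X,Y))` as an element of
`ℂ[X,Y,t]`, with variables `0 ↦ X`, `1 ↦ Y`, `2 ↦ t`. -/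
def kernelPoly (St : Finset (ℤ × ℤ)) (w : ℤ × ℤ → ℂ) (mx my : ℕ) :
    MvPolynomial (Fin 3) ℂ :=
  MvPolynomial.X 0 ^ mx * MvPolynomial.X 1 ^ my -
    MvPolynomial.X 2 *
      ∑ p ∈ St, MvPolynomial.C (w p) *
        MvPolynomial.X 0 ^ (p.1 + (mx : ℤ)).toNat *
        MvPolynomial.X 1 ^ (p.2 + (my : ℤ)).toNat

/-- `-mx` (resp. `-my`) is the smallest `X`-exponent (resp. `Y`-exponent) of the model. -/
structure ExponentBounds (St : Finset (ℤ × ℤ)) (mx my : ℕ) : Prop where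
  lowerX : ∀ p ∈ St, -(mx : ℤ) ≤ p.1
  lowerY : ∀ p ∈ St, -(my : ℤ) ≤ p.2
  attainX : ∃ p ∈ St, p.1 = -(mx : ℤ)
  attainY : ∃ p ∈ St, p.2 = -(my : ℤ)

/-- `x`-adjacency : equal first coordinates and equal values of `S`. -/
def XAdj (St : Finset (ℤ × ℤ)) (w : ℤ × ℤ → ℂ) (a b : K × K) : Prop :=
  a.1 = b.1 ∧ stepEval St w a.1 a.2 = stepEval St w b.1 b.2

/-- `y`-adjacency : equal second coordinates and equal values of `S`. -/
def YAdj (St : Finset (ℤ × ℤ)) (w : ℤ × ℤ → ℂ) (a b : K × K) : Prop :=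
  a.2 = b.2 ∧ stepEval St w a.1 a.2 = stepEval St w b.1 b.2

/-- Adjacency. -/
def Adj (St : Finset (ℤ × ℤ)) (w : ℤ × ℤ → ℂ) (a b : K × K) : Prop :=
  XAdj St w a b ∨ YAdj St w a b

/-- The orbit of the walk: the equivalence class of `(x,y)` under the
reflexive-transitive closure of adjacency. -/
def orbit (St : Finset (ℤ × ℤ)) (w : ℤ × ℤ → ℂ) (x y : K) : Set (K × K) :=
  {a | Relation.ReflTransGen (Adj St w) (x, y) a}

/-- `k = ℂ(S(x,y))`. -/
def kF (St : Finset (ℤ × ℤ)) (w : ℤ × ℤ → ℂ) (x y : K) : IntermediateField ℂ K :=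
  adjoin ℂ {stepEval St w x y}

/-- `k(x) = ℂ(x, S(x,y))`. -/
def kxF (St : Finset (ℤ × ℤ)) (w : ℤ × ℤ → ℂ) (x y : K) : IntermediateField ℂ K :=
  adjoin ℂ {x, stepEval St w x y}

/-- `k(y) = ℂ(y, S(x,y))`. -/
def kyF (St : Finset (ℤ × ℤ)) (w : ℤ × ℤ → ℂ) (x y : K) : IntermediateField ℂ K :=
  adjoin ℂ {y, stepEval St w x y}

/-- `k(x,y) = ℂ(x,y)`. -/
def kxyF (x y : K) : IntermediateField ℂ K := adjoin ℂ {x, y}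

/-- `k(𝒪)`: the subfield generated over `k` by all coordinates of the orbit. -/
def orbitF (St : Finset (ℤ × ℤ)) (w : ℤ × ℤ → ℂ) (x y : K) : IntermediateField ℂ K :=
  adjoin ℂ ({stepEval St w x y} ∪ {z | ∃ a ∈ orbit St w x y, z = a.1 ∨ z = a.2})

/-- The standing hypotheses: nonzero weights, a non-univariate step polynomial,
`x, y` algebraically independent over `ℂ`, and `𝕂` an algebraic closure of `ℂ(x,y)`. -/
structure Setting (St : Finset (ℤ × ℤ)) (w : ℤ × ℤ → ℂ) (x y : K) : Prop where
  weight_ne : ∀ p ∈ St, w p ≠ 0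
  notUniv : NotUnivariate St
  indep : AlgebraicIndependent ℂ ![x, y]
  algClosed : IsAlgClosed K
  algebraic : Algebra.IsAlgebraic (kxyF x y) K

lemma self_mem_orbit (St : Finset (ℤ × ℤ)) (w : ℤ × ℤ → ℂ) (x y : K) :
    (x, y) ∈ orbit St w x y := Relation.ReflTransGen.refl

lemma x_mem_orbitF (St : Finset (ℤ × ℤ)) (w : ℤ × ℤ → ℂ) (x y : K) :
    x ∈ orbitF St w x y := by
  apply subset_adjoin
  exact Set.mem_union_right _ ⟨(x, y), self_mem_orbit St w x y, Or.inl rfl⟩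

lemma y_mem_orbitF (St : Finset (ℤ × ℤ)) (w : ℤ × ℤ → ℂ) (x y : K) :
    y ∈ orbitF St w x y := by
  apply subset_adjoin
  exact Set.mem_union_right _ ⟨(x, y), self_mem_orbit St w x y, Or.inr rfl⟩

lemma S_mem_orbitF (St : Finset (ℤ × ℤ)) (w : ℤ × ℤ → ℂ) (x y : K) :
    stepEval St w x y ∈ orbitF St w x y := by
  apply subset_adjoin
  exact Set.mem_union_left _ rfl

lemma x_mem_kxF (St : Finset (ℤ × ℤ)) (w : ℤ × ℤ → ℂ) (x y : K) :
    x ∈ kxF St w x y :=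
  subset_adjoin ℂ _ (Set.mem_insert _ _)

lemma S_mem_kxF (St : Finset (ℤ × ℤ)) (w : ℤ × ℤ → ℂ) (x y : K) :
    stepEval St w x y ∈ kxF St w x y :=
  subset_adjoin ℂ _ (Set.mem_insert_of_mem _ rfl)

lemma y_mem_kyF (St : Finset (ℤ × ℤ)) (w : ℤ × ℤ → ℂ) (x y : K) :
    y ∈ kyF St w x y :=
  subset_adjoin ℂ _ (Set.mem_insert _ _)

lemma S_mem_kyF (St : Finset (ℤ × ℤ)) (w : ℤ × ℤ → ℂ) (x y : K) :
    stepEval St w x y ∈ kyF St w x y :=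
  subset_adjoin ℂ _ (Set.mem_insert_of_mem _ rfl)

/-- The subgroup of `ℂ`-automorphisms of `M` fixing the subfield `E` pointwise. -/
def fixingAuts (E M : IntermediateField ℂ K) : Subgroup (↥M ≃ₐ[ℂ] ↥M) where
  carrier := {σ | ∀ (z : K) (_ : z ∈ E) (hzM : z ∈ M), σ ⟨z, hzM⟩ = ⟨z, hzM⟩}
  one_mem' := fun _ _ _ => rfl
  mul_mem' := by
    intro σ τ hσ hτ z hzE hzM
    show σ (τ ⟨z, hzM⟩) = ⟨z, hzM⟩
    rw [hτ z hzE hzM, hσ z hzE hzM]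
  inv_mem' := by
    intro σ hσ z hzE hzM
    show σ.symm ⟨z, hzM⟩ = ⟨z, hzM⟩
    conv_lhs => rw [← hσ z hzE hzM]
    exact σ.symm_apply_apply _

/-- The Galois group `G_x = Gal(k(𝒪)|k(x))`. -/
def Gx (St : Finset (ℤ × ℤ)) (w : ℤ × ℤ → ℂ) (x y : K) :
    Subgroup (↥(orbitF St w x y) ≃ₐ[ℂ] ↥(orbitF St w x y)) :=
  fixingAuts (kxF St w x y) (orbitF St w x y)

/-- The Galois group `G_y = Gal(k(𝒪)|k(y))`. -/
def Gy (St : Finset (ℤ × ℤ)) (w : ℤ × ℤ → ℂ) (x y : K) :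
    Subgroup (↥(orbitF St w x y) ≃ₐ[ℂ] ↥(orbitF St w x y)) :=
  fixingAuts (kyF St w x y) (orbitF St w x y)

/-- The Galois group `G_{xy} = Gal(k(𝒪)|k(x,y))`. -/
def Gxy (St : Finset (ℤ × ℤ)) (w : ℤ × ℤ → ℂ) (x y : K) :
    Subgroup (↥(orbitF St w x y) ≃ₐ[ℂ] ↥(orbitF St w x y)) :=
  fixingAuts (kxyF x y) (orbitF St w x y)

/-- Extend an automorphism of an intermediate field to a map on all of `K`
(by the identity outside). -/
def extendAut {M : IntermediateField ℂ K} (σ : ↥M ≃ₐ[ℂ] ↥M) (z : K) : K :=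
  if h : z ∈ M then (σ ⟨z, h⟩ : K) else z

/-- The coordinate-wise action of an automorphism on a `0`-chain. -/
def actChain {M : IntermediateField ℂ K} (σ : ↥M ≃ₐ[ℂ] ↥M)
    (γ : (K × K) →₀ ℂ) : (K × K) →₀ ℂ :=
  Finsupp.mapDomain (Prod.map (extendAut σ) (extendAut σ)) γ

/-- Evaluation of a polynomial `P(X,Y,t)` at `(u, v, 1/S(x,y))` for `(u,v) = a`. -/
def evalPt (St : Finset (ℤ × ℤ)) (w : ℤ × ℤ → ℂ) (x y : K)
    (P : MvPolynomial (Fin 3) ℂ) (a : K × K) : K :=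
  MvPolynomial.aeval ![a.1, a.2, (stepEval St w x y)⁻¹] P

/-- Evaluation of a polynomial `P(X,Y,t)` at `(x, y, 1/S(x,y))`. -/
def evalXY (St : Finset (ℤ × ℤ)) (w : ℤ × ℤ → ℂ) (x y : K)
    (P : MvPolynomial (Fin 3) ℂ) : K :=
  evalPt St w x y P (x, y)

/-- Evaluation of the fraction `A/B` at `(a.1, a.2, 1/S(x,y))`. -/
def fracEval (St : Finset (ℤ × ℤ)) (w : ℤ × ℤ → ℂ) (x y : K)
    (A B : MvPolynomial (Fin 3) ℂ) (a : K × K) : K :=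
  evalPt St w x y A a / evalPt St w x y B a

/-- Evaluation (orbit sum) of the fraction `A/B` on a `0`-chain. -/
def chainEval (St : Finset (ℤ × ℤ)) (w : ℤ × ℤ → ℂ) (x y : K)
    (A B : MvPolynomial (Fin 3) ℂ) (γ : (K × K) →₀ ℂ) : K :=
  γ.sum fun a c => algebraMap ℂ K c * fracEval St w x y A B a

/-- A `0`-chain cancels decoupled fractions: the orbit sum of every regular fraction
of the form `F(X,t) + G(Y,t)` on it vanishes. -/
def CancelsDecoupled (St : Finset (ℤ × ℤ)) (w : ℤ × ℤ → ℂ) (mx my : ℕ)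
    (x y : K) (α : (K × K) →₀ ℂ) : Prop :=
  ∀ A₁ B₁ A₂ B₂ : MvPolynomial (Fin 3) ℂ,
    A₁ ∈ MvPolynomial.supported ℂ ({0, 2} : Set (Fin 3)) →
    B₁ ∈ MvPolynomial.supported ℂ ({0, 2} : Set (Fin 3)) →
    A₂ ∈ MvPolynomial.supported ℂ ({1, 2} : Set (Fin 3)) →
    B₂ ∈ MvPolynomial.supported ℂ ({1, 2} : Set (Fin 3)) →
    ¬ kernelPoly St w mx my ∣ B₁ → ¬ kernelPoly St w mx my ∣ B₂ →
    (α.sum fun a c =>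
      algebraMap ℂ K c * (fracEval St w x y A₁ B₁ a + fracEval St w x y A₂ B₂ a)) = 0

/-- The field of fractions `ℂ(X,Y,t)`. -/
abbrev FF : Type := FractionRing (MvPolynomial (Fin 3) ℂ)

/-- The inclusion of `ℂ[X,Y,t]` into `ℂ(X,Y,t)`. -/
def toFF (P : MvPolynomial (Fin 3) ℂ) : FF := algebraMap (MvPolynomial (Fin 3) ℂ) FF P

/-- The regular fraction `A/B` admits a Galois decoupling:
`A/B = F + G + K̃·R` with `F ∈ ℂ(X,t)`, `G ∈ ℂ(Y,t)` and `R` regular. -/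
def AdmitsDecoupling (St : Finset (ℤ × ℤ)) (w : ℤ × ℤ → ℂ) (mx my : ℕ)
    (A B : MvPolynomial (Fin 3) ℂ) : Prop :=
  ∃ F₁ F₂ G₁ G₂ R₁ R₂ : MvPolynomial (Fin 3) ℂ,
    F₁ ∈ MvPolynomial.supported ℂ ({0, 2} : Set (Fin 3)) ∧
    F₂ ∈ MvPolynomial.supported ℂ ({0, 2} : Set (Fin 3)) ∧
    G₁ ∈ MvPolynomial.supported ℂ ({1, 2} : Set (Fin 3)) ∧
    G₂ ∈ MvPolynomial.supported ℂ ({1, 2} : Set (Fin 3)) ∧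
    ¬ kernelPoly St w mx my ∣ F₂ ∧ ¬ kernelPoly St w mx my ∣ G₂ ∧
    ¬ kernelPoly St w mx my ∣ R₂ ∧
    toFF A / toFF B =
      toFF F₁ / toFF F₂ + toFF G₁ / toFF G₂ +
        toFF (kernelPoly St w mx my) * (toFF R₁ / toFF R₂)

/-- `(I, J) = (A/B, Cc/D)` is a pair of Galois invariants: `I - J = K̃·R` with `R` regular. -/
def IsInvariantPair (St : Finset (ℤ × ℤ)) (w : ℤ × ℤ → ℂ) (mx my : ℕ)
    (A B Cc D : MvPolynomial (Fin 3) ℂ) : Prop :=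
  ∃ R₁ R₂ : MvPolynomial (Fin 3) ℂ, ¬ kernelPoly St w mx my ∣ R₂ ∧
    toFF A / toFF B - toFF Cc / toFF D =
      toFF (kernelPoly St w mx my) * (toFF R₁ / toFF R₂)

/-- A constant pair of Galois invariants: both members are equivalent to a
common fraction `c ∈ ℂ(t)` modulo `K̃`. -/
def IsConstantPair (St : Finset (ℤ × ℤ)) (w : ℤ × ℤ → ℂ) (mx my : ℕ)
    (A B Cc D : MvPolynomial (Fin 3) ℂ) : Prop :=
  IsInvariantPair St w mx my A B Cc D ∧
  ∃ c₁ c₂ : MvPolynomial (Fin 3) ℂ,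
    c₁ ∈ MvPolynomial.supported ℂ ({2} : Set (Fin 3)) ∧
    c₂ ∈ MvPolynomial.supported ℂ ({2} : Set (Fin 3)) ∧ c₂ ≠ 0 ∧
    IsInvariantPair St w mx my A B c₁ c₂ ∧ IsInvariantPair St w mx my Cc D c₁ c₂

/-- `(γx, γy)` is a pseudo-decoupling of `(x,y)`. -/
def PseudoDecoupling (St : Finset (ℤ × ℤ)) (w : ℤ × ℤ → ℂ) (mx my : ℕ)
    (x y : K) (γx γy : (K × K) →₀ ℂ) : Prop :=
  ∀ A B : MvPolynomial (Fin 3) ℂ, ¬ kernelPoly St w mx my ∣ B →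
    AdmitsDecoupling St w mx my A B →
      fracEval St w x y A B (x, y) =
          chainEval St w x y A B γx + chainEval St w x y A B γy ∧
        chainEval St w x y A B γx ∈ kxF St w x y ∧
        chainEval St w x y A B γy ∈ kyF St w x y

/-- `(gx, gy, a)` is a decoupling of `(x,y)` in the orbit. -/
def IsDecoupling (St : Finset (ℤ × ℤ)) (w : ℤ × ℤ → ℂ) (mx my : ℕ)
    (x y : K) (gx gy a : (K × K) →₀ ℂ) : Prop :=
  Finsupp.single (x, y) (1 : ℂ) = gx + gy + a ∧
  (∀ σ ∈ Gx St w x y, actChain σ gx = gx) ∧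
  (∀ σ ∈ Gy St w x y, actChain σ gy = gy) ∧
  CancelsDecoupled St w mx my x y a

/-- The `x`-part of the boundary of a `1`-chain. -/
def boundaryX (St : Finset (ℤ × ℤ)) (w : ℤ × ℤ → ℂ)
    (c : ((K × K) × (K × K)) →₀ ℂ) : (K × K) →₀ ℂ :=
  c.sum fun e coeff =>
    if XAdj St w e.1 e.2 then
      coeff • (Finsupp.single e.2 (1 : ℂ) - Finsupp.single e.1 (1 : ℂ)) else 0

/-- The `y`-part of the boundary of a `1`-chain. -/
def boundaryY (St : Finset (ℤ × ℤ)) (w : ℤ × ℤ → ℂ)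
    (c : ((K × K) × (K × K)) →₀ ℂ) : (K × K) →₀ ℂ :=
  c.sum fun e coeff =>
    if YAdj St w e.1 e.2 then
      coeff • (Finsupp.single e.2 (1 : ℂ) - Finsupp.single e.1 (1 : ℂ)) else 0

/-- The `0`-chain induced by a bicolored loop. -/
def IsBicoloredChain (St : Finset (ℤ × ℤ)) (w : ℤ × ℤ → ℂ) (x y : K)
    (α : (K × K) →₀ ℂ) : Prop :=
  ∃ (n : ℕ) (b : ℕ → K × K), 0 < n ∧ b (2 * n) = b 0 ∧
    (∀ j < 2 * n, b j ∈ orbit St w x y) ∧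
    (∀ i < n, XAdj St w (b (2 * i)) (b (2 * i + 1)) ∧
      YAdj St w (b (2 * i + 1)) (b (2 * i + 2))) ∧
    α = ∑ j ∈ Finset.range (2 * n), ((-1 : ℂ) ^ (j + 1)) • Finsupp.single (b j) (1 : ℂ)

/-- The `0`-chain `ω = (1/|𝒪|) ∑_{a ∈ 𝒪} a`. -/
def omegaChain (St : Finset (ℤ × ℤ)) (w : ℤ × ℤ → ℂ) (x y : K)
    (h : (orbit St w x y).Finite) : (K × K) →₀ ℂ :=
  ((h.toFinset.card : ℂ))⁻¹ • ∑ a ∈ h.toFinset, Finsupp.single a (1 : ℂ)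

/-- The average `[G]·γ = (1/|G|) ∑_{σ ∈ G} σ·γ` of a `0`-chain under a group. -/
def groupAverage {M : IntermediateField ℂ K} (G : Subgroup (↥M ≃ₐ[ℂ] ↥M))
    (γ : (K × K) →₀ ℂ) : (K × K) →₀ ℂ :=
  ((Nat.card G : ℂ))⁻¹ • ∑ᶠ σ ∈ (G : Set (↥M ≃ₐ[ℂ] ↥M)), actChain σ γ

/-- `ℂ[X,t]` (two variables: `0` and `1`). -/
abbrev MvP2 : Type := MvPolynomial (Fin 2) ℂ

/-- `ℂ(X,t)`, the fraction field of `ℂ[X,t]`. -/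
abbrev CXt : Type := FractionRing MvP2

/-- Constants `ℂ → ℂ(X,t)`. -/
def cconst : ℂ →+* CXt := (algebraMap MvP2 CXt).comp (MvPolynomial.C)

/-- The first generator of `ℂ(X,t)`. -/
def gen0 : CXt := algebraMap MvP2 CXt (MvPolynomial.X 0)

/-- The second generator of `ℂ(X,t)`. -/
def gen1 : CXt := algebraMap MvP2 CXt (MvPolynomial.X 1)

/-- The kernel polynomial viewed as a polynomial in `Y` over `ℂ(X,t)`. -/
def kernelInY (St : Finset (ℤ × ℤ)) (w : ℤ × ℤ → ℂ) (mx my : ℕ) :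
    Polynomial CXt :=
  MvPolynomial.eval₂ ((Polynomial.C : CXt →+* Polynomial CXt).comp cconst)
    ![Polynomial.C gen0, Polynomial.X, Polynomial.C gen1]
    (kernelPoly St w mx my)

/-- The kernel polynomial viewed as a polynomial in `X` over `ℂ(Y,t)`. -/
def kernelInX (St : Finset (ℤ × ℤ)) (w : ℤ × ℤ → ℂ) (mx my : ℕ) :
    Polynomial CXt :=
  MvPolynomial.eval₂ ((Polynomial.C : CXt →+* Polynomial CXt).comp cconst)
    ![Polynomial.X, Polynomial.C gen0, Polynomial.C gen1]
    (kernelPoly St w mx my)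

/-- The kernel polynomial viewed as a polynomial in `X, Y` over `ℂ(t)`. -/
def kernelInXY (St : Finset (ℤ × ℤ)) (w : ℤ × ℤ → ℂ) (mx my : ℕ) :
    MvPolynomial (Fin 2) (RatFunc ℂ) :=
  MvPolynomial.eval₂
    ((MvPolynomial.C : RatFunc ℂ →+* MvPolynomial (Fin 2) (RatFunc ℂ)).comp
      (RatFunc.C : ℂ →+* RatFunc ℂ))
    ![MvPolynomial.X 0, MvPolynomial.X 1, MvPolynomial.C RatFunc.X]
    (kernelPoly St w mx my)

/-- The specialization `K̃(x, Y, 1/S(x,y))` as a polynomial in `Y` over `k(x)`. -/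
def kernelAtX (St : Finset (ℤ × ℤ)) (w : ℤ × ℤ → ℂ) (mx my : ℕ) (x y : K) :
    Polynomial ↥(kxF St w x y) :=
  MvPolynomial.aeval
    ![Polynomial.C (⟨x, x_mem_kxF St w x y⟩ : kxF St w x y), Polynomial.X,
      Polynomial.C (⟨(stepEval St w x y)⁻¹, inv_mem (S_mem_kxF St w x y)⟩ : kxF St w x y)]
    (kernelPoly St w mx my)

/-- The specialization `K̃(X, y, 1/S(x,y))` as a polynomial in `X` over `k(y)`. -/
def kernelAtY (St : Finset (ℤ × ℤ)) (w : ℤ × ℤ → ℂ) (mx my : ℕ) (x y : K) :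
    Polynomial ↥(kyF St w x y) :=
  MvPolynomial.aeval
    ![Polynomial.X, Polynomial.C (⟨y, y_mem_kyF St w x y⟩ : kyF St w x y),
      Polynomial.C (⟨(stepEval St w x y)⁻¹, inv_mem (S_mem_kyF St w x y)⟩ : kyF St w x y)]
    (kernelPoly St w mx my)

/-- Values of regular fractions with numerator and denominator supported on a set
of variables. -/
def regRange (St : Finset (ℤ × ℤ)) (w : ℤ × ℤ → ℂ) (x y : K) (mx my : ℕ)
    (s : Set (Fin 3)) : Set K :=
  {z | ∃ A B : MvPolynomial (Fin 3) ℂ,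
    A ∈ MvPolynomial.supported ℂ s ∧ B ∈ MvPolynomial.supported ℂ s ∧
    ¬ kernelPoly St w mx my ∣ B ∧ z = evalXY St w x y A / evalXY St w x y B}

end QuadrantWalk

/-!
The kernel equation `S(x, Y) = S(x, y)`, multiplied by `x^mx Y^my`, is a nonzero polynomial
relation for `y` over `k(x) = ℂ(x, S(x,y))`: some step has a nonzero `Y`-exponent, and the
corresponding coefficient is a nonzero polynomial in the transcendental `x`. Hence `𝕂` is
algebraic, and so (being algebraically closed of characteristic zero) Galois, over `k(x)`.
A `k(x)`-automorphism `τ` fixes `x` and `S(x,y)`, so `(x, τ y)` is `x`-adjacent to `(x, y)` and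
`τ` preserves adjacency: it permutes the finite orbit and fixes the orbit average `H_ω`, which
therefore lies in `k(x)`; symmetrically it lies in `k(y)`. Finally `G_x` and `G_y` both fix
`k(x) ∩ k(y)` pointwise, hence so does the group they generate.
-/

namespace QuadrantWalk

theorem pow_toNat_add_eq {G : Type*} [GroupWithZero G] {u : G} (hu : u ≠ 0) {a : ℤ} {m : ℕ}
    (h : -(m : ℤ) ≤ a) : u ^ (a + m).toNat = u ^ a * u ^ m := by
  rw [← zpow_natCast, Int.toNat_of_nonneg (by omega), zpow_add₀ hu, zpow_natCast]

theorem ne_zero_of_transcendental {R A : Type*} [CommRing R] [Nontrivial R] [CommRing A]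
    [Algebra R A] {u : A} (hu : Transcendental R u) : u ≠ 0 :=
  fun h => hu (h ▸ isAlgebraic_zero)

theorem exists_mem_ne_zero_of_ne {α β : Type*} [Zero β] {s : Finset α} {f : α → β}
    (h : ∃ p ∈ s, ∃ q ∈ s, f p ≠ f q) : ∃ r ∈ s, f r ≠ 0 := by
  obtain ⟨p, hp, q, hq, hpq⟩ := h
  by_cases hp0 : f p = 0
  · exact ⟨q, hq, fun hq0 => hpq (hp0.trans hq0.symm)⟩
  · exact ⟨p, hp, hp0⟩

section Algebraicity

open Polynomial

theorem isAlgebraic_of_mem_lifts {R A : Type*} [CommRing R] [CommRing A] [Algebra R A]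
    {P : A[X]} (hP : P ∈ lifts (algebraMap R A)) (hP0 : P ≠ 0) {v : A} (hv : P.eval v = 0) :
    IsAlgebraic R v := by
  obtain ⟨q, rfl⟩ := hP
  exact ⟨q, fun hq => hP0 (by rw [hq, map_zero]), by
    rwa [aeval_def, eval₂_eq_eval_map]⟩

variable {K : Type} [Field K] [Algebra ℂ K]

theorem sum_mul_pow_ne_zero {ι : Type*} {T : Finset ι} {e : ι → ℕ} (he : Set.InjOn e T)
    {c : ι → ℂ} {r : ι} (hr : r ∈ T) (hc : c r ≠ 0) {u : K} (hu : Transcendental ℂ u) :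
    ∑ i ∈ T, algebraMap ℂ K (c i) * u ^ e i ≠ 0 := by
  have hP : ∑ i ∈ T, monomial (e i) (c i) ≠ 0 := by
    refine ne_of_apply_ne (coeff · (e r)) ?_
    rw [finsetSum_coeff, Finset.sum_eq_single r (fun i hi hir => ?_) (absurd hr)]
    · simpa using hc
    · exact coeff_monomial_of_ne _ fun h => hir (he hi hr h.symm)
  simpa [map_sum, aeval_monomial, mul_comm] using
    (map_ne_zero_iff _ (transcendental_iff_injective.mp hu)).mpr hP

theorem isAlgebraic_of_sum_zpow_mem (E : IntermediateField ℂ K) {ι : Type*} {T : Finset ι}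
    {a b : ι → ℤ} {c : ι → ℂ} {m n : ℕ} (hab : Set.InjOn (fun i => (a i, b i)) T)
    (ha : ∀ i ∈ T, -(m : ℤ) ≤ a i) (hb : ∀ i ∈ T, -(n : ℤ) ≤ b i) (hc : ∀ i ∈ T, c i ≠ 0)
    {r : ι} (hr : r ∈ T) (hbr : b r ≠ 0) {u v : K} (hu : Transcendental ℂ u) (huE : u ∈ E)
    (hv : v ≠ 0) (hs : ∑ i ∈ T, algebraMap ℂ K (c i) * u ^ a i * v ^ b i ∈ E) :
    IsAlgebraic E v := by
  set s := ∑ i ∈ T, algebraMap ℂ K (c i) * u ^ a i * v ^ b i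
  have hu0 := ne_zero_of_transcendental hu
  -- `P = u^m X^n (∑ c_i u^{a_i} X^{b_i} - s)`, with exponents shifted to be nonnegative
  set P : K[X] := ∑ i ∈ T, C (algebraMap ℂ K (c i) * u ^ (a i + m).toNat) * X ^ (b i + n).toNat
    + C (-(u ^ m * s)) * X ^ n
  have hlifts : ∀ k ∈ E, C k ∈ lifts (algebraMap E K) := fun k hk => C_mem_lifts _ (⟨k, hk⟩ : E)
  refine isAlgebraic_of_mem_lifts (P := P) ?_ ?_ ?_
  · refine add_mem (Subsemiring.sum_mem _ fun i _ => mul_mem (hlifts _ ?_) ?_) (mul_mem ?_ ?_)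
    · exact mul_mem (E.algebraMap_mem _) (pow_mem huE _)
    · exact pow_mem (X_mem_lifts _) _
    · exact hlifts _ (neg_mem (mul_mem (pow_mem huE _) hs))
    · exact pow_mem (X_mem_lifts _) _
  · set j := (b r + n).toNat
    have hcoeff : P.coeff j = ∑ i ∈ T with j = (b i + n).toNat,
        algebraMap ℂ K (c i) * u ^ (a i + m).toNat := by
      simp only [P, coeff_add, finsetSum_coeff, coeff_C_mul_X_pow]
      rw [Finset.sum_filter, if_neg (by have := hb r hr; omega), add_zero]
    refine ne_of_apply_ne (coeff · j) ?_
    simp only [coeff_zero, hcoeff]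
    have hrj : r ∈ T.filter (fun i => j = (b i + n).toNat) := Finset.mem_filter.mpr ⟨hr, rfl⟩
    refine sum_mul_pow_ne_zero (fun i hi k hk hik => ?_) hrj (hc r hr) hu
    simp only [Finset.coe_filter, Set.mem_ofPred_eq] at hi hk
    have := ha i hi.1; have := ha k hk.1; have := hb i hi.1; have := hb k hk.1
    exact hab hi.1 hk.1 (Prod.ext (by dsimp only; omega) (by dsimp only; omega))
  · have hsum : ∑ i ∈ T, algebraMap ℂ K (c i) * u ^ (a i + m).toNat * v ^ (b i + n).toNat
        = u ^ m * v ^ n * s := by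
      rw [Finset.mul_sum]
      refine Finset.sum_congr rfl fun i hi => ?_
      rw [pow_toNat_add_eq hu0 (ha i hi), pow_toNat_add_eq hv (hb i hi)]
      ring
    simp only [P, eval_add, eval_finsetSum, eval_mul, eval_C, eval_pow, eval_X, hsum]
    ring

theorem y_isAlgebraic_kxF {St : Finset (ℤ × ℤ)} {w : ℤ × ℤ → ℂ} {x y : K} {mx my : ℕ}
    (hset : Setting St w x y) (hb : ExponentBounds St mx my) :
    IsAlgebraic (kxF St w x y) y := by
  obtain ⟨r, hr, hr2⟩ := exists_mem_ne_zero_of_ne hset.notUniv.2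
  exact isAlgebraic_of_sum_zpow_mem _ (a := Prod.fst) (fun p _ q _ h => h) hb.lowerX hb.lowerY
    hset.weight_ne hr hr2 (hset.indep.transcendental 0) (x_mem_kxF St w x y)
    (ne_zero_of_transcendental (hset.indep.transcendental 1)) (S_mem_kxF St w x y)

theorem x_isAlgebraic_kyF {St : Finset (ℤ × ℤ)} {w : ℤ × ℤ → ℂ} {x y : K} {mx my : ℕ}
    (hset : Setting St w x y) (hb : ExponentBounds St mx my) :
    IsAlgebraic (kyF St w x y) x := by
  obtain ⟨r, hr, hr1⟩ := exists_mem_ne_zero_of_ne hset.notUniv.1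
  refine isAlgebraic_of_sum_zpow_mem _ (a := Prod.snd) (b := Prod.fst)
    (fun p _ q _ h => Prod.ext (congrArg Prod.snd h) (congrArg Prod.fst h)) hb.lowerY hb.lowerX
    hset.weight_ne hr hr1 (hset.indep.transcendental 1) (y_mem_kyF St w x y)
    (ne_zero_of_transcendental (hset.indep.transcendental 0)) ?_
  convert S_mem_kyF St w x y using 1
  exact Finset.sum_congr rfl fun p _ => mul_right_comm _ _ _

end Algebraicity

section Galois

variable {K : Type} [Field K] [Algebra ℂ K]

theorem isAlgebraic_of_isAlgebraic_adjoin_insert {E : IntermediateField ℂ K} {S : Set K} {t : K}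
    (hK : Algebra.IsAlgebraic (adjoin ℂ (insert t S)) K) (hS : S ⊆ E) (ht : IsAlgebraic E t) :
    Algebra.IsAlgebraic E K := by
  let F : IntermediateField E K := IntermediateField.adjoin E {t}
  have : Algebra.IsAlgebraic E F := isAlgebraic_adjoin_simple ht.isIntegral
  have hle : adjoin ℂ (insert t S) ≤ F.restrictScalars ℂ := by
    rw [adjoin_le_iff, Set.insert_subset_iff]
    exact ⟨mem_adjoin_simple_self E t, fun s hs => F.algebraMap_mem ⟨s, hS hs⟩⟩
  have : Algebra.IsAlgebraic F K :=
    ⟨fun z => (hK.isAlgebraic z).tower_top_of_subalgebra_le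
      (A := (adjoin ℂ (insert t S)).toSubalgebra) (B := (F.restrictScalars ℂ).toSubalgebra) hle⟩
  exact Algebra.IsAlgebraic.trans E F K

theorem mem_of_forall_algEquiv_apply_eq (E : IntermediateField ℂ K) [IsAlgClosed K]
    [Algebra.IsAlgebraic E K] {z : K} (hz : ∀ τ : K ≃ₐ[E] K, τ z = z) : z ∈ E := by
  have : IsAlgClosure E K := ⟨‹_›, ‹_›⟩
  obtain ⟨e, rfl⟩ := (InfiniteGalois.mem_range_algebraMap_iff_fixed z).mpr hz
  exact e.2

end Galois

section OrbitSum

variable {K : Type} [Field K] [Algebra ℂ K] {St : Finset (ℤ × ℤ)} {w : ℤ × ℤ → ℂ} {x y : K}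

theorem stepEval_map (φ : K →ₐ[ℂ] K) (u v : K) :
    φ (stepEval St w u v) = stepEval St w (φ u) (φ v) := by
  simp [stepEval, map_zpow₀]

theorem Adj.map (φ : K →ₐ[ℂ] K) {a b : K × K} (h : Adj St w a b) :
    Adj St w (Prod.map φ φ a) (Prod.map φ φ b) := by
  rcases h with ⟨h₁, h₂⟩ | ⟨h₁, h₂⟩
  · exact Or.inl ⟨congrArg φ h₁, by simp only [Prod.map, ← stepEval_map, h₂]⟩
  · exact Or.inr ⟨congrArg φ h₁, by simp only [Prod.map, ← stepEval_map, h₂]⟩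

theorem mapsTo_orbit (φ : K →ₐ[ℂ] K) (hS : φ (stepEval St w x y) = stepEval St w x y)
    (hxy : φ x = x ∨ φ y = y) :
    Set.MapsTo (Prod.map φ φ) (orbit St w x y) (orbit St w x y) := by
  have hstep : stepEval St w x y = stepEval St w (φ x) (φ y) := by rw [← stepEval_map, hS]
  have hadj : Adj St w (x, y) (φ x, φ y) :=
    hxy.imp (fun h => ⟨h.symm, hstep⟩) (fun h => ⟨h.symm, hstep⟩)
  exact fun a ha => Relation.ReflTransGen.head hadj
    (Relation.ReflTransGen.lift (Prod.map φ φ) (fun _ _ => Adj.map φ) _ _ ha)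

theorem fracEval_map (φ : K →ₐ[ℂ] K) (hS : φ (stepEval St w x y) = stepEval St w x y)
    (A B : MvPolynomial (Fin 3) ℂ) (a : K × K) :
    φ (fracEval St w x y A B a) = fracEval St w x y A B (Prod.map φ φ a) := by
  have hpt : ∀ P, φ (evalPt St w x y P a) = evalPt St w x y P (Prod.map φ φ a) := by
    intro P
    rw [evalPt, evalPt, MvPolynomial.comp_aeval_apply]
    congr 2
    funext i
    fin_cases i <;> simp [hS]
  rw [fracEval, fracEval, map_div₀, hpt, hpt]

theorem chainEval_omegaChain (A B : MvPolynomial (Fin 3) ℂ) (hfin : (orbit St w x y).Finite) :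
    chainEval St w x y A B (omegaChain St w x y hfin) =
      algebraMap ℂ K (hfin.toFinset.card : ℂ)⁻¹ *
        ∑ a ∈ hfin.toFinset, fracEval St w x y A B a := by
  have hlin : ∀ γ, chainEval St w x y A B γ =
      Finsupp.linearCombination ℂ (fracEval St w x y A B) γ := fun γ => by
    simp only [chainEval, Finsupp.linearCombination_apply, Algebra.smul_def]
  simp [hlin, omegaChain, map_sum, Finsupp.linearCombination_single, Finset.mul_sum,
    Algebra.smul_def]

theorem map_chainEval_omegaChain (φ : K →ₐ[ℂ] K) (hS : φ (stepEval St w x y) = stepEval St w x y)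
    (hxy : φ x = x ∨ φ y = y) (A B : MvPolynomial (Fin 3) ℂ) (hfin : (orbit St w x y).Finite) :
    φ (chainEval St w x y A B (omegaChain St w x y hfin)) =
      chainEval St w x y A B (omegaChain St w x y hfin) := by
  have hmaps := mapsTo_orbit φ hS hxy
  have hinj : Set.InjOn (Prod.map φ φ) (orbit St w x y) :=
    (φ.injective.prodMap φ.injective).injOn
  have hbij := (hfin.injOn_iff_bijOn_of_mapsTo hmaps).mp hinj
  rw [chainEval_omegaChain, map_mul, AlgHom.commutes, map_sum]
  congr 1
  refine Finset.sum_nbij (Prod.map φ φ) (fun a ha => ?_) ?_ ?_ fun a _ => fracEval_map φ hS A B a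
  · simpa using hmaps (by simpa using ha)
  · simpa using hinj
  · simpa using hbij.surjOn

end OrbitSum

section Invariance

variable {K : Type} [Field K] [Algebra ℂ K]

theorem fixingAuts_anti {E E' M : IntermediateField ℂ K} (h : E ≤ E') :
    fixingAuts E' M ≤ fixingAuts E M :=
  fun _ hσ z hz hzM => hσ z (h hz) hzM

theorem extendAut_eq_self {E M : IntermediateField ℂ K} {σ : M ≃ₐ[ℂ] M}
    (hσ : σ ∈ fixingAuts E M) {z : K} (hz : z ∈ E) : extendAut σ z = z := by
  unfold extendAut
  split_ifs with hzM
  · exact congrArg Subtype.val (hσ z hz hzM)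
  · rfl

theorem chainEval_omegaChain_mem {St : Finset (ℤ × ℤ)} {w : ℤ × ℤ → ℂ} {x y : K}
    (E : IntermediateField ℂ K) [IsAlgClosed K] [Algebra.IsAlgebraic E K]
    (hS : stepEval St w x y ∈ E) (hxy : x ∈ E ∨ y ∈ E) (A B : MvPolynomial (Fin 3) ℂ)
    (hfin : (orbit St w x y).Finite) :
    chainEval St w x y A B (omegaChain St w x y hfin) ∈ E :=
  mem_of_forall_algEquiv_apply_eq E fun τ =>
    map_chainEval_omegaChain ((τ : K →ₐ[E] K).restrictScalars ℂ) (τ.commutes ⟨_, hS⟩)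
      (hxy.imp (fun hx => τ.commutes ⟨x, hx⟩) (fun hy => τ.commutes ⟨y, hy⟩)) A B hfin

end Invariance

/-- if the orbit is finite and `ω = (1/|𝒪|) ∑_{a ∈ 𝒪} a`, then for
every regular fraction `H = A/B` the orbit sum `H_ω` is a Galois invariant: it is
fixed by every element of the group of the walk `G = ⟨G_x, G_y⟩`, and it lies in
`k(x) ∩ k(y)`. -/
theorem stmt12 {K : Type} [Field K] [Algebra ℂ K]
    (St : Finset (ℤ × ℤ)) (w : ℤ × ℤ → ℂ) (x y : K) (mx my : ℕ)
    (hset : Setting St w x y) (hb : ExponentBounds St mx my)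
    (hfin : (orbit St w x y).Finite) :
    ∀ A B : MvPolynomial (Fin 3) ℂ, ¬ kernelPoly St w mx my ∣ B →
      (∀ σ ∈ Gx St w x y ⊔ Gy St w x y,
        extendAut σ (chainEval St w x y A B (omegaChain St w x y hfin)) =
          chainEval St w x y A B (omegaChain St w x y hfin)) ∧
      chainEval St w x y A B (omegaChain St w x y hfin) ∈
        kxF St w x y ⊓ kyF St w x y := by
  intro A B _
  have := hset.algClosed
  have : Algebra.IsAlgebraic (kxF St w x y) K :=
    isAlgebraic_of_isAlgebraic_adjoin_insert (Set.pair_comm x y ▸ hset.algebraic)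
      (Set.singleton_subset_iff.mpr (x_mem_kxF St w x y)) (y_isAlgebraic_kxF hset hb)
  have : Algebra.IsAlgebraic (kyF St w x y) K :=
    isAlgebraic_of_isAlgebraic_adjoin_insert hset.algebraic
      (Set.singleton_subset_iff.mpr (y_mem_kyF St w x y)) (x_isAlgebraic_kyF hset hb)
  have hmem : chainEval St w x y A B (omegaChain St w x y hfin) ∈ kxF St w x y ⊓ kyF St w x y :=
    ⟨chainEval_omegaChain_mem _ (S_mem_kxF St w x y) (.inl (x_mem_kxF St w x y)) A B hfin,
      chainEval_omegaChain_mem _ (S_mem_kyF St w x y) (.inr (y_mem_kyF St w x y)) A B hfin⟩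
  refine ⟨fun σ hσ => extendAut_eq_self ?_ hmem, hmem⟩
  exact sup_le (fixingAuts_anti inf_le_left) (fixingAuts_anti inf_le_right) hσ

end QuadrantWalk
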